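/- arXiv:1903.07908 — 5 statements merged into one kernel-verified Lean document; each statement's English description precedes it below -/
import Mathlib

section
/- For every r with 1/4 ≤ r ≤ 0.495, we have π·r² ≥ 0.56127 · arcsin(r/(1 − r)). Equivalently, the function f(r) = π·r² / arcsin(r/(1 − r)) restricted to [1/4, 0.495] attains its global minimum at r = 0.495, where its value is at least 0.56127. -/
/-!
The cone half-angle `θ r = arcsin (r / (1 - r))` is convex on `[0, 1/2]`, being the composition
of the convex increasing `arcsin` on `[0, 1]` with the convex map `r ↦ r / (1 - r)`. Hence on each
of `[1/4, 2/5]` and `[2/5, 0.495]` it lies below its chord, and the claim reduces to a quadratic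
inequality in `r` once `θ` is bounded at the three nodes. There `arcsin x = π/2 - arccos x`
and the degree-six Taylor lower bound for `cos` are used: at `r = 0.495` the margin in `θ` is
below `2·10⁻⁵`, too small for lower-order bounds.
-/

open Real Set

namespace Real

theorem cos_le_one_sub_sq_div_two_add_pow_four (x : ℝ) : cos x ≤ 1 - x ^ 2 / 2 + x ^ 4 / 24 := by
  wlog hx : 0 ≤ x
  · simpa [Even.neg_pow (by decide : Even 2), Even.neg_pow (by decide : Even 4)] using
      this (-x) (by linarith)
  let f (t : ℝ) : ℝ := 1 - t ^ 2 / 2 + t ^ 4 / 24 - cos t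
  have hderiv (t : ℝ) : deriv f t = sin t - (t - t ^ 3 / 6) := by
    simp (disch := fun_prop) [f]
    ring
  have hmono : MonotoneOn f (Ici 0) := by
    refine monotoneOn_of_deriv_nonneg (convex_Ici 0) (by fun_prop) (by fun_prop) fun t ht ↦ ?_
    rw [interior_Ici] at ht
    simpa [hderiv] using sin_ge_sub_cube ht.le
  have := hmono self_mem_Ici hx hx
  norm_num [f] at this
  linarith

theorem sin_le_sub_cube_add_pow_five {x : ℝ} (hx : 0 ≤ x) :
    sin x ≤ x - x ^ 3 / 6 + x ^ 5 / 120 := by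
  let f (t : ℝ) : ℝ := t - t ^ 3 / 6 + t ^ 5 / 120 - sin t
  have hderiv (t : ℝ) : deriv f t = 1 - t ^ 2 / 2 + t ^ 4 / 24 - cos t := by
    simp (disch := fun_prop) [f]
    ring
  have hmono : MonotoneOn f (Ici 0) := by
    refine monotoneOn_of_deriv_nonneg (convex_Ici 0) (by fun_prop) (by fun_prop) fun t _ ↦ ?_
    simpa [hderiv] using cos_le_one_sub_sq_div_two_add_pow_four t
  have := hmono self_mem_Ici hx hx
  norm_num [f] at this
  linarith

theorem one_sub_sq_div_two_add_pow_four_sub_pow_six_le_cos (x : ℝ) :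
    1 - x ^ 2 / 2 + x ^ 4 / 24 - x ^ 6 / 720 ≤ cos x := by
  wlog hx : 0 ≤ x
  · simpa [Even.neg_pow (by decide : Even 2), Even.neg_pow (by decide : Even 4),
      Even.neg_pow (by decide : Even 6)] using this (-x) (by linarith)
  let f (t : ℝ) : ℝ := cos t - (1 - t ^ 2 / 2 + t ^ 4 / 24 - t ^ 6 / 720)
  have hderiv (t : ℝ) : deriv f t = t - t ^ 3 / 6 + t ^ 5 / 120 - sin t := by
    simp (disch := fun_prop) [f]
    ring
  have hmono : MonotoneOn f (Ici 0) := by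
    refine monotoneOn_of_deriv_nonneg (convex_Ici 0) (by fun_prop) (by fun_prop) fun t ht ↦ ?_
    rw [interior_Ici] at ht
    simpa [hderiv] using sin_le_sub_cube_add_pow_five ht.le
  have := hmono self_mem_Ici hx hx
  norm_num [f] at this
  linarith

theorem arcsin_le_pi_div_two_sub_of_le_cos_taylor {x φ : ℝ} (h₀ : 0 ≤ φ) (hπ : φ ≤ π)
    (h : x ≤ 1 - φ ^ 2 / 2 + φ ^ 4 / 24 - φ ^ 6 / 720) : arcsin x ≤ π / 2 - φ :=
  calc arcsin x ≤ arcsin (cos φ) :=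
        monotone_arcsin (h.trans (one_sub_sq_div_two_add_pow_four_sub_pow_six_le_cos φ))
    _ = π / 2 - φ := by rw [arcsin_eq_pi_div_two_sub_arccos, arccos_cos h₀ hπ]

theorem convexOn_arcsin : ConvexOn ℝ (Icc 0 1) arcsin := by
  refine MonotoneOn.convexOn_of_deriv (convex_Icc 0 1) continuous_arcsin.continuousOn
    (fun x hx ↦ ?_) ?_
  · rw [interior_Icc] at hx
    exact (differentiableAt_arcsin.2 ⟨by linarith [hx.1], hx.2.ne⟩).differentiableWithinAt
  · rw [interior_Icc, deriv_arcsin]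
    intro x hx y hy hxy
    have : 0 < 1 - y ^ 2 := by nlinarith [hy.1, hy.2]
    exact one_div_le_one_div_of_le (sqrt_pos.2 this) (sqrt_le_sqrt (by nlinarith [hx.1]))

end Real

theorem ConvexOn.sub_mul_le {s : Set ℝ} {f : ℝ → ℝ} (hf : ConvexOn ℝ s f) {x y z : ℝ}
    (hx : x ∈ s) (hz : z ∈ s) (hxy : x ≤ y) (hyz : y ≤ z) :
    (z - x) * f y ≤ (z - y) * f x + (y - x) * f z := by
  rcases hxy.eq_or_lt with rfl | hxy
  · simp
  rcases hyz.eq_or_lt with rfl | hyz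
  · simp
  exact hf.secant_mono_aux1 hx hz hxy hyz

theorem convexOn_div_one_sub : ConvexOn ℝ (Iio 1) fun r : ℝ ↦ r / (1 - r) := by
  have hderiv {r : ℝ} (hr : r < 1) : HasDerivAt (fun r : ℝ ↦ r / (1 - r)) (1 / (1 - r) ^ 2) r :=
    ((hasDerivAt_id' r).div ((hasDerivAt_id' r).const_sub 1) (by linarith)).congr_deriv (by ring)
  refine MonotoneOn.convexOn_of_deriv (convex_Iio 1)
    (fun r hr ↦ (hderiv hr).continuousAt.continuousWithinAt)
    (fun r hr ↦ (hderiv (interior_subset (s := Iio 1) hr)).differentiableAt.differentiableWithinAt)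
    ?_
  rw [interior_Iio]
  intro x hx y hy hxy
  rw [(hderiv hx).deriv, (hderiv hy).deriv]
  have : 0 < 1 - y := by linarith [mem_Iio.1 hy]
  gcongr

theorem convexOn_arcsin_div_one_sub :
    ConvexOn ℝ (Icc 0 (1 / 2)) fun r ↦ arcsin (r / (1 - r)) := by
  have hmaps : MapsTo (fun r : ℝ ↦ r / (1 - r)) (Icc 0 (1 / 2)) (Icc 0 1) := fun r hr ↦
    ⟨div_nonneg hr.1 (by linarith [hr.2]), (div_le_one (by linarith [hr.2])).2 (by linarith [hr.2])⟩
  have hcont : ContinuousOn (fun r : ℝ ↦ r / (1 - r)) (Icc 0 (1 / 2)) :=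
    continuousOn_id.div (continuousOn_const.sub continuousOn_id) fun r hr ↦ by linarith [hr.2]
  have himage : Convex ℝ ((fun r : ℝ ↦ r / (1 - r)) '' Icc 0 (1 / 2)) :=
    (isPreconnected_Icc.image _ hcont).ordConnected.convex
  exact (convexOn_arcsin.subset hmaps.image_subset himage).comp
    (convexOn_div_one_sub.subset (fun r hr ↦ by simp only [mem_Iio]; linarith [hr.2])
      (convex_Icc _ _))
    (monotone_arcsin.monotoneOn _)

theorem arcsin_div_one_sub_mul_le {a b r Ta Tb : ℝ} (ha : 0 ≤ a) (hb : b ≤ 1 / 2) (har : a ≤ r)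
    (hrb : r ≤ b) (hTa : arcsin (a / (1 - a)) ≤ Ta) (hTb : arcsin (b / (1 - b)) ≤ Tb) :
    (b - a) * arcsin (r / (1 - r)) ≤ (b - r) * Ta + (r - a) * Tb :=
  calc (b - a) * arcsin (r / (1 - r))
      ≤ (b - r) * arcsin (a / (1 - a)) + (r - a) * arcsin (b / (1 - b)) :=
        convexOn_arcsin_div_one_sub.sub_mul_le ⟨ha, by linarith⟩ ⟨by linarith, hb⟩ har hrb
    _ ≤ (b - r) * Ta + (r - a) * Tb := by gcongr

/-- Density of cones, first part: for `1/4 ≤ r ≤ 0.495`,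
the disk area `π·r²` is at least `0.56127` times the cone area
`arcsin (r / (1 - r))`. -/
theorem cone_density_large (r : ℝ) (h₁ : 1/4 ≤ r) (h₂ : r ≤ 0.495) :
    π * r ^ 2 ≥ 0.56127 * arcsin (r / (1 - r)) := by
  have hπ₃ := pi_gt_three
  -- 1.23, 0.84 and 0.19933 lie just below arccos (1/3), arccos (2/3) and arccos (99/101).
  have hθ₀ : arcsin ((1 / 4) / (1 - 1 / 4)) ≤ π / 2 - 1.23 :=
    arcsin_le_pi_div_two_sub_of_le_cos_taylor (by norm_num) (by linarith) (by norm_num)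
  have hθ₁ : arcsin ((2 / 5) / (1 - 2 / 5)) ≤ π / 2 - 0.84 :=
    arcsin_le_pi_div_two_sub_of_le_cos_taylor (by norm_num) (by linarith) (by norm_num)
  have hθ₂ : arcsin (0.495 / (1 - 0.495)) ≤ π / 2 - 0.19933 :=
    arcsin_le_pi_div_two_sub_of_le_cos_taylor (by norm_num) (by linarith) (by norm_num)
  have hπ := pi_lt_d4
  have hr2 : r ^ 2 ≤ 0.495 ^ 2 := by gcongr
  have hπr : π * (0.56127 / 2 - r ^ 2) ≤ 3.1416 * (0.56127 / 2 - r ^ 2) :=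
    mul_le_mul_of_nonneg_right hπ.le (by nlinarith)
  rcases le_total r (2 / 5) with hr | hr
  · have := arcsin_div_one_sub_mul_le (by norm_num) (by norm_num) h₁ hr hθ₀ hθ₁
    -- the quadratic left after the chord bound is minimal near `r = 0.2762`
    nlinarith [sq_nonneg (r - 0.2762)]
  · have := arcsin_div_one_sub_mul_le (by norm_num) (by norm_num) hr h₂ hθ₁ hθ₂
    nlinarith [sq_nonneg (0.495 - r)]
end

section
/- For every r with 0.2019 ≤ r ≤ 1/2, we have π·r² ≥ (1/2) · arcsin(r/(1 − r)). Equivalently, the function f(r) = π·r² / arcsin(r/(1 − r)) restricted to [0.2019, 1/2] attains its global minimum 1/2 at r = 1/2. -/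
/-!
Since `y = 2πr²` lies in `[0, π/2]`, the claim is equivalent to `r / (1 - r) ≤ sin y`.
For `r ≤ 1/3` this follows from `sin y ≥ y - y³/6`, which near `r = 0.2019` leaves a margin of
only about `3·10⁻⁴`. Near `r = 1/2`, where equality holds, write `sin y = cos (π(1 - 4r²)/2)`
and use `cos t ≥ 1 - t²/2`: both sides of the resulting inequality carry a factor `1 - 2r`.
-/

open Real

lemma arcsin_le_of_le_sin {x y : ℝ} (hy : y ∈ Set.Icc (-(π / 2)) (π / 2)) (h : x ≤ sin y) :
    arcsin x ≤ y :=
  (arcsin_le_arcsin h).trans_eq (arcsin_sin hy.1 hy.2)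

lemma sub_cube_div_six_le_sub_cube_div_six {a b : ℝ} (ha : 0 ≤ a) (hab : a ≤ b) (hb : b ^ 2 ≤ 2) :
    a - a ^ 3 / 6 ≤ b - b ^ 3 / 6 := by
  have hsum : a ^ 2 + a * b + b ^ 2 ≤ 6 := by nlinarith
  nlinarith [mul_nonneg (sub_nonneg.2 hab) (sub_nonneg.2 hsum)]

lemma div_one_sub_le_sin_two_pi_mul_sq_of_le_third {r : ℝ} (h₁ : 0.2019 ≤ r) (h₂ : r ≤ 1 / 3) :
    r / (1 - r) ≤ sin (2 * π * r ^ 2) := by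
  have hr : 0 ≤ r := by linarith
  have hpoly : r / (1 - r) ≤ 6.28 * r ^ 2 - (6.28 * r ^ 2) ^ 3 / 6 := by
    rw [div_le_iff₀ (by linarith)]
    nlinarith [mul_nonneg (sub_nonneg.2 h₁) (sub_nonneg.2 h₂), pow_nonneg hr 3,
      mul_nonneg (mul_nonneg (sub_nonneg.2 h₁) (sub_nonneg.2 h₂)) (pow_nonneg hr 3)]
  have hy : 2 * π * r ^ 2 ≤ 1 := by
    nlinarith [mul_le_mul_of_nonneg_left (pow_le_pow_left₀ hr h₂ 2) pi_pos.le, pi_lt_d2]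
  calc r / (1 - r) ≤ 6.28 * r ^ 2 - (6.28 * r ^ 2) ^ 3 / 6 := hpoly
    _ ≤ 2 * π * r ^ 2 - (2 * π * r ^ 2) ^ 3 / 6 :=
      sub_cube_div_six_le_sub_cube_div_six (by positivity) (by nlinarith [pi_gt_d2])
        ((pow_le_one₀ (by positivity) hy).trans one_le_two)
    _ ≤ sin (2 * π * r ^ 2) := sin_ge_sub_cube (by positivity)

lemma div_one_sub_le_sin_two_pi_mul_sq_of_third_le {r : ℝ} (h₁ : 1 / 3 ≤ r) (h₂ : r ≤ 1 / 2) :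
    r / (1 - r) ≤ sin (2 * π * r ^ 2) := by
  have hpoly : (1 - 2 * r) * (1 + 2 * r) ^ 2 * (1 - r) ≤ 0.8 := by
    nlinarith [mul_nonneg (sub_nonneg.2 h₁) (sub_nonneg.2 h₂)]
  have hpoly_nonneg : 0 ≤ (1 - 2 * r) * (1 + 2 * r) ^ 2 * (1 - r) := by
    have : 0 ≤ 1 - 2 * r := by linarith
    have : 0 ≤ 1 - r := by linarith
    positivity
  have hpi_sq : π ^ 2 ≤ 10 := by nlinarith [pi_lt_d2, pi_pos]
  have hkey : π ^ 2 * ((1 - 2 * r) * (1 + 2 * r) ^ 2 * (1 - r)) ≤ 8 := by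
    nlinarith [mul_le_mul hpi_sq hpoly hpoly_nonneg (by norm_num)]
  have hsin_eq : sin (2 * π * r ^ 2) = cos (π / 2 * (1 - 4 * r ^ 2)) := by
    rw [← sin_pi_div_two_sub]; ring_nf
  rw [hsin_eq, div_le_iff₀ (by linarith)]
  calc r ≤ (1 - (π / 2 * (1 - 4 * r ^ 2)) ^ 2 / 2) * (1 - r) := by
        nlinarith [mul_nonneg (show 0 ≤ 1 - 2 * r by linarith) (sub_nonneg.2 hkey)]
    _ ≤ cos (π / 2 * (1 - 4 * r ^ 2)) * (1 - r) :=
      mul_le_mul_of_nonneg_right one_sub_sq_div_two_le_cos (by linarith)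

/-- Density of cones, second part: for `0.2019 ≤ r ≤ 1/2`,
the disk area `π·r²` is at least `1/2` times the cone area
`arcsin (r / (1 - r))`. -/
theorem cone_density_half (r : ℝ) (h₁ : 0.2019 ≤ r) (h₂ : r ≤ 1/2) :
    π * r ^ 2 ≥ 1 / 2 * arcsin (r / (1 - r)) := by
  have hsin : r / (1 - r) ≤ sin (2 * π * r ^ 2) := by
    rcases le_total r (1 / 3) with h | h
    · exact div_one_sub_le_sin_two_pi_mul_sq_of_le_third h₁ h
    · exact div_one_sub_le_sin_two_pi_mul_sq_of_third_le h h₂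
  have hr_sq : r ^ 2 ≤ 1 / 4 := by nlinarith
  have hy : 2 * π * r ^ 2 ∈ Set.Icc (-(π / 2)) (π / 2) :=
    ⟨by nlinarith [pi_pos], by nlinarith [mul_le_mul_of_nonneg_left hr_sq pi_pos.le]⟩
  linarith [arcsin_le_of_le_sin hy hsin]
end

section
/- For every x with 0 < x ≤ 1/3, we have π·x / (4·arcsin x) ≥ π / (12·arcsin(1/3)), and moreover π / (12·arcsin(1/3)) ≥ 0.77036. -/
/-!
Since `sin` is concave on `[0, π]`, `sin u / u` decreases there; substituting `u = arcsin x`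
shows that `x / arcsin x` decreases on `(0, 1]`, so the density is smallest at `x = 1/3`.
The numerical bound amounts to `sin 0.33984 ≥ 1/3`. The margin is only about `3·10⁻⁶`, too
small for the cubic Taylor bounds, so it is read off the degree-7 Taylor polynomial, which
bounds `sin` from below on `[0, ∞)`.
-/

open Real Set Finset

namespace Real

noncomputable def sinTaylor (n : ℕ) (x : ℝ) : ℝ :=
  ∑ k ∈ range n, (-1) ^ k * x ^ (2 * k + 1) / (2 * k + 1).factorial

noncomputable def cosTaylor (n : ℕ) (x : ℝ) : ℝ :=
  ∑ k ∈ range n, (-1) ^ k * x ^ (2 * k) / (2 * k).factorial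

@[simp] lemma sinTaylor_zero_right (n : ℕ) : sinTaylor n 0 = 0 := by
  simp [sinTaylor]

@[simp] lemma cosTaylor_succ_zero_right (n : ℕ) : cosTaylor (n + 1) 0 = 1 := by
  simp [cosTaylor, sum_range_succ']

lemma hasDerivAt_const_mul_pow_div_factorial (c : ℝ) (m : ℕ) (x : ℝ) :
    HasDerivAt (fun y : ℝ => c * y ^ (m + 1) / (m + 1).factorial) (c * x ^ m / m.factorial) x := by
  refine (((hasDerivAt_pow (m + 1) x).const_mul c).div_const _).congr_deriv ?_
  rw [Nat.factorial_succ]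
  push_cast
  field_simp

lemma hasDerivAt_sinTaylor (n : ℕ) (x : ℝ) : HasDerivAt (sinTaylor n) (cosTaylor n x) x :=
  HasDerivAt.fun_sum fun k _ => hasDerivAt_const_mul_pow_div_factorial _ (2 * k) x

lemma hasDerivAt_cosTaylor_succ (n : ℕ) (x : ℝ) :
    HasDerivAt (cosTaylor (n + 1)) (-sinTaylor n x) x := by
  have hcos : cosTaylor (n + 1) = fun y =>
      ∑ k ∈ range n, (-1 : ℝ) ^ (k + 1) * y ^ (2 * k + 1 + 1) / (2 * k + 1 + 1).factorial + 1 := by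
    ext y
    simp [cosTaylor, sum_range_succ', mul_add]
  have hsin : -sinTaylor n x =
      ∑ k ∈ range n, (-1) ^ (k + 1) * x ^ (2 * k + 1) / (2 * k + 1).factorial := by
    simp [sinTaylor, ← sum_neg_distrib, pow_succ, neg_div]
  rw [hcos, hsin]
  exact (HasDerivAt.fun_sum fun k _ =>
    hasDerivAt_const_mul_pow_div_factorial _ (2 * k + 1) x).add_const 1

lemma monotoneOn_Ici_of_hasDerivAt_nonneg {f f' : ℝ → ℝ} {a : ℝ}
    (hf : ∀ x, HasDerivAt f (f' x) x) (hf' : ∀ x, a ≤ x → 0 ≤ f' x) : MonotoneOn f (Ici a) :=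
  monotoneOn_of_hasDerivWithinAt_nonneg (convex_Ici a)
    (fun x _ => (hf x).continuousAt.continuousWithinAt) (fun x _ => (hf x).hasDerivWithinAt)
    (fun x hx => hf' x (interior_Ici.subset hx).le)

lemma taylor_alternating_bounds_cos_sin (n : ℕ) {x : ℝ} (hx : 0 ≤ x) :
    0 ≤ (-1) ^ n * (cosTaylor (n + 1) x - cos x) ∧
      0 ≤ (-1) ^ n * (sinTaylor (n + 1) x - sin x) := by
  induction n generalizing x with
  | zero => simpa [cosTaylor, sinTaylor] using ⟨cos_le_one x, sin_le hx⟩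
  | succ n ih =>
    have hcos : ∀ {t : ℝ}, 0 ≤ t → 0 ≤ (-1) ^ (n + 1) * (cosTaylor (n + 2) t - cos t) := by
      intro t ht
      have hmono := monotoneOn_Ici_of_hasDerivAt_nonneg
        (fun s => ((hasDerivAt_cosTaylor_succ (n + 1) s).sub (hasDerivAt_cos s)).const_mul
          ((-1 : ℝ) ^ (n + 1)))
        (fun s hs => by convert (ih hs).2 using 1; ring)
      simpa using hmono self_mem_Ici ht ht
    have hsin := monotoneOn_Ici_of_hasDerivAt_nonneg
      (fun s => ((hasDerivAt_sinTaylor (n + 2) s).sub (hasDerivAt_sin s)).const_mul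
        ((-1 : ℝ) ^ (n + 1)))
      (fun _ => hcos)
    exact ⟨hcos hx, by simpa using hsin self_mem_Ici hx hx⟩

lemma arcsin_one_third_le : arcsin (1 / 3) ≤ 0.33984 := by
  rw [arcsin_le_iff_le_sin ⟨by norm_num, by norm_num⟩
    ⟨by linarith [pi_pos], by linarith [pi_gt_three]⟩]
  have h := (taylor_alternating_bounds_cos_sin 3 (x := 0.33984) (by norm_num)).2
  norm_num [sinTaylor, sum_range_succ, Nat.factorial] at h
  linarith

lemma antitoneOn_sin_div : AntitoneOn (fun x => sin x / x) (Ioc 0 π) := by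
  intro x hx y hy hxy
  have h := strictConcaveOn_sin_Icc.concaveOn.neg.secant_mono (a := 0) ⟨le_rfl, pi_pos.le⟩
    (Ioc_subset_Icc_self hx) (Ioc_subset_Icc_self hy) hx.1.ne' hy.1.ne' hxy
  simp only [Pi.neg_apply, sin_zero, neg_zero, sub_zero, neg_div, neg_le_neg_iff] at h
  exact h

lemma antitoneOn_div_arcsin : AntitoneOn (fun x => x / arcsin x) (Ioc 0 1) := by
  have mem : ∀ x ∈ Ioc (0 : ℝ) 1, arcsin x ∈ Ioc 0 π := fun x hx =>
    ⟨arcsin_pos.2 hx.1, (arcsin_le_pi_div_two x).trans (by linarith [pi_pos])⟩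
  intro x hx y hy hxy
  have h := antitoneOn_sin_div (mem x hx) (mem y hy) (monotone_arcsin hxy)
  simpa only [sin_arcsin (by linarith [hx.1]) hx.2, sin_arcsin (by linarith [hy.1]) hy.2] using h

end Real

/-- Zipper of length one: for `0 < x ≤ 1/3` the density `π·x/(4·arcsin x)` is
minimized at `x = 1/3`, and this minimum is at least `0.77036`. -/
theorem zipper_length_one_density :
    (∀ x : ℝ, 0 < x → x ≤ 1/3 →
      π * x / (4 * arcsin x) ≥ π / (12 * arcsin (1/3))) ∧
    π / (12 * arcsin (1/3)) ≥ 0.77036 := by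
  refine ⟨fun x hx hx3 => ?_, ?_⟩
  · have h := antitoneOn_div_arcsin ⟨hx, by linarith⟩ ⟨by norm_num, by norm_num⟩ hx3
    calc π * x / (4 * arcsin x) = π / 4 * (x / arcsin x) := by ring
      _ ≥ π / 4 * (1 / 3 / arcsin (1 / 3)) := by gcongr
      _ = π / (12 * arcsin (1 / 3)) := by ring
  · have hT : 0 < arcsin (1 / 3) := arcsin_pos.2 (by norm_num)
    rw [ge_iff_le, le_div_iff₀ (by positivity)]
    linarith [arcsin_one_third_le, pi_gt_d6]
end

section
/- For every λ with 1/8 ≤ λ ≤ 1/4, the quantity V_AD(λ) = arcsin(λ/(1/2 + λ)) · (7/4 − (1/2 + 2λ)²) − (3/4)·arcsin(1/3) satisfies V_AD(λ) ≤ 0.01756. In particular V_AD(1/4) = 0. -/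
/-!
Substituting `x = λ / (1/2 + λ)`, which runs over `[1/5, 1/3]`, turns the claim into
`arcsin x · (6 - 16x + 6x²) / (4(1 - x)²) ≤ 0.01756 + (3/4) arcsin (1/3)`.
The maximum of the left side falls short of the right side by less than `10⁻⁷`, so both
arcsines are replaced by Taylor polynomials, obtained by comparing derivatives with
truncations of the binomial series of `1 / √(1 - x²)`; what remains is a polynomial
inequality on `[1/5, 1/3]`, certified around its minimiser.
-/

open Real Set

/-- Truncations of the binomial series `∑ C(2k, k) (u / 4)ᵏ` of `1 / √(1 - u)`; in the upper
one the last coefficient `35/128` is enlarged by `9/8 = 1 / (1 - 1/9)`, which dominates the tail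
for `u ≤ 1/9` because the coefficients decrease. -/
noncomputable def invSqrtUpper (u : ℝ) : ℝ := 1 + u/2 + 3*u^2/8 + 5*u^3/16 + 315*u^4/1024

noncomputable def invSqrtLower (u : ℝ) : ℝ :=
  1 + u/2 + 3*u^2/8 + 5*u^3/16 + 35*u^4/128 + 63*u^5/256 + 231*u^6/1024

noncomputable def arcsinUpper (x : ℝ) : ℝ := x + x^3/6 + 3*x^5/40 + 5*x^7/112 + 35*x^9/1024

noncomputable def arcsinLower (x : ℝ) : ℝ :=
  x + x^3/6 + 3*x^5/40 + 5*x^7/112 + 35*x^9/1152 + 63*x^11/2816 + 231*x^13/13312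

theorem one_div_sqrt_one_sub_le_invSqrtUpper {u : ℝ} (h0 : 0 ≤ u) (h1 : u ≤ 1/9) :
    1 / √(1 - u) ≤ invSqrtUpper u := by
  have hs : 0 < 1 - u := by linarith
  have hS : 0 ≤ invSqrtUpper u := by unfold invSqrtUpper; positivity
  have key : 1 ≤ invSqrtUpper u ^ 2 * (1 - u) := by
    unfold invSqrtUpper
    nlinarith [mul_nonneg (pow_nonneg h0 4) (sub_nonneg.2 h1),
      mul_nonneg (pow_nonneg h0 5) (sub_nonneg.2 h1), mul_nonneg (pow_nonneg h0 6) (sub_nonneg.2 h1),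
      mul_nonneg (pow_nonneg h0 7) (sub_nonneg.2 h1), mul_nonneg (pow_nonneg h0 8) (sub_nonneg.2 h1)]
  rw [div_le_iff₀ (sqrt_pos.2 hs)]
  calc 1 ≤ √(invSqrtUpper u ^ 2 * (1 - u)) := one_le_sqrt.2 key
    _ = invSqrtUpper u * √(1 - u) := by rw [sqrt_mul (sq_nonneg _), sqrt_sq hS]

theorem invSqrtLower_le_one_div_sqrt_one_sub {u : ℝ} (h0 : 0 ≤ u) (h1 : u < 1) :
    invSqrtLower u ≤ 1 / √(1 - u) := by
  have hs : 0 < 1 - u := by linarith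
  have hS : 0 ≤ invSqrtLower u := by unfold invSqrtLower; positivity
  have key : invSqrtLower u ^ 2 * (1 - u) ≤ 1 := by
    unfold invSqrtLower
    nlinarith [pow_nonneg h0 7, pow_nonneg h0 8, pow_nonneg h0 9, pow_nonneg h0 10,
      pow_nonneg h0 11, pow_nonneg h0 12, pow_nonneg h0 13]
  rw [le_div_iff₀ (sqrt_pos.2 hs)]
  calc invSqrtLower u * √(1 - u) = √(invSqrtLower u ^ 2 * (1 - u)) := by
        rw [sqrt_mul (sq_nonneg _), sqrt_sq hS]
    _ ≤ 1 := sqrt_le_one.2 key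

theorem hasDerivAt_arcsinUpper (x : ℝ) : HasDerivAt arcsinUpper (invSqrtUpper (x^2)) x := by
  unfold arcsinUpper
  refine HasDerivAt.congr_deriv (((((hasDerivAt_id' x).add ((hasDerivAt_pow 3 x).div_const 6)).add
    (((hasDerivAt_pow 5 x).const_mul 3).div_const 40)).add
    (((hasDerivAt_pow 7 x).const_mul 5).div_const 112)).add
    (((hasDerivAt_pow 9 x).const_mul 35).div_const 1024)) ?_
  simp only [invSqrtUpper]
  norm_num
  ring

theorem hasDerivAt_arcsinLower (x : ℝ) : HasDerivAt arcsinLower (invSqrtLower (x^2)) x := by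
  unfold arcsinLower
  refine HasDerivAt.congr_deriv (((((((hasDerivAt_id' x).add ((hasDerivAt_pow 3 x).div_const 6)).add
    (((hasDerivAt_pow 5 x).const_mul 3).div_const 40)).add
    (((hasDerivAt_pow 7 x).const_mul 5).div_const 112)).add
    (((hasDerivAt_pow 9 x).const_mul 35).div_const 1152)).add
    (((hasDerivAt_pow 11 x).const_mul 63).div_const 2816)).add
    (((hasDerivAt_pow 13 x).const_mul 231).div_const 13312)) ?_
  simp only [invSqrtLower]
  norm_num
  ring

section DerivComparison

variable {p p' : ℝ → ℝ} {a b : ℝ}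

theorem arcsin_le_of_hasDerivAt (ha : -1 < a) (hb : b < 1) (hp : ∀ x, HasDerivAt p (p' x) x)
    (hpa : arcsin a ≤ p a) (hbound : ∀ x ∈ Ico a b, 1 / √(1 - x^2) ≤ p' x) :
    ∀ x ∈ Icc a b, arcsin x ≤ p x :=
  image_le_of_deriv_right_le_deriv_boundary continuous_arcsin.continuousOn
    (fun x hx => (hasDerivAt_arcsin (by linarith [hx.1]) (by linarith [hx.2])).hasDerivWithinAt)
    hpa (fun x _ => (hp x).continuousAt.continuousWithinAt) (fun x _ => (hp x).hasDerivWithinAt)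
    hbound

theorem le_arcsin_of_hasDerivAt (ha : -1 < a) (hb : b < 1) (hp : ∀ x, HasDerivAt p (p' x) x)
    (hpa : p a ≤ arcsin a) (hbound : ∀ x ∈ Ico a b, p' x ≤ 1 / √(1 - x^2)) :
    ∀ x ∈ Icc a b, p x ≤ arcsin x :=
  image_le_of_deriv_right_le_deriv_boundary (fun x _ => (hp x).continuousAt.continuousWithinAt)
    (fun x _ => (hp x).hasDerivWithinAt) hpa continuous_arcsin.continuousOn
    (fun x hx => (hasDerivAt_arcsin (by linarith [hx.1]) (by linarith [hx.2])).hasDerivWithinAt)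
    hbound

end DerivComparison

theorem arcsin_le_arcsinUpper {x : ℝ} (h0 : 0 ≤ x) (h1 : x ≤ 1/3) : arcsin x ≤ arcsinUpper x :=
  arcsin_le_of_hasDerivAt (by norm_num) (by norm_num) hasDerivAt_arcsinUpper
    (by simp [arcsinUpper])
    (fun y hy => one_div_sqrt_one_sub_le_invSqrtUpper (sq_nonneg y) (by nlinarith [hy.1, hy.2]))
    x ⟨h0, h1⟩

theorem arcsinLower_le_arcsin {x : ℝ} (h0 : 0 ≤ x) (h1 : x < 1) : arcsinLower x ≤ arcsin x :=
  le_arcsin_of_hasDerivAt (by norm_num) h1 hasDerivAt_arcsinLower (by simp [arcsinLower])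
    (fun y hy => invSqrtLower_le_one_div_sqrt_one_sub (sq_nonneg y) (by nlinarith [hy.1, hy.2]))
    x ⟨h0, le_rfl⟩

/-- `282267/10⁶` is the minimiser of the difference of the two sides to six digits; the
difference divided by `(x - 282267/10⁶)²` is, up to a negligible linear part, a polynomial of
degree 9 whose Bernstein coefficients on `[1/5, 1/3]` are all about `12`. -/
theorem arcsinUpper_mul_le {x : ℝ} (h1 : 1/5 ≤ x) (h2 : x ≤ 1/3) :
    arcsinUpper x * ((6 - 16*x + 6*x^2) / (4*(1 - x)^2))
      ≤ 0.01756 + 3/4 * arcsinLower (1/3) := by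
  have hB : ∀ i j : ℕ, 0 ≤ (x - 282267/1000000)^2 * ((x - 1/5)^i * (1/3 - x)^j) := fun i j =>
    mul_nonneg (sq_nonneg _) (mul_nonneg (pow_nonneg (by linarith) i) (pow_nonneg (by linarith) j))
  rw [mul_div_assoc', div_le_iff₀ (by nlinarith)]
  norm_num [arcsinUpper, arcsinLower]
  linarith [hB 0 9, hB 1 8, hB 2 7, hB 3 6, hB 4 5, hB 5 4, hB 6 3, hB 7 2, hB 8 1, hB 9 0]

theorem seven_fourths_sub_sq_eq {l x : ℝ} (hl : 1/2 + l ≠ 0) (hx : x = l / (1/2 + l)) :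
    7/4 - (1/2 + 2*l)^2 = (6 - 16*x + 6*x^2) / (4*(1 - x)^2) := by
  have hl' : 1 + 2*l ≠ 0 := by contrapose! hl; linarith
  rw [hx]
  field_simp
  ring

/-- Gap bound: for `1/8 ≤ λ ≤ 1/4`, the quantity
`V_AD(λ) = arcsin(λ/(1/2+λ))·(7/4 − (1/2+2λ)²) − (3/4)·arcsin(1/3)` is at most
`0.01756`; moreover `V_AD(1/4) = 0`. -/
theorem VAD_bound :
    (∀ l : ℝ, 1/8 ≤ l → l ≤ 1/4 →
      arcsin (l / (1/2 + l)) * (7/4 - (1/2 + 2*l)^2) - 3/4 * arcsin (1/3)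
        ≤ 0.01756) ∧
    arcsin ((1/4) / (1/2 + 1/4)) * (7/4 - (1/2 + 2*(1/4))^2)
      - 3/4 * arcsin (1/3) = 0 := by
  refine ⟨fun l hl1 hl2 => ?_, by norm_num; ring⟩
  have hl : 0 < 1/2 + l := by linarith
  set x := l / (1/2 + l) with hx
  have hx1 : 1/5 ≤ x := by rw [hx, le_div_iff₀ hl]; linarith
  have hx2 : x ≤ 1/3 := by rw [hx, div_le_iff₀ hl]; linarith
  have hfactor : 0 ≤ 7/4 - (1/2 + 2*l)^2 := by nlinarith
  calc arcsin x * (7/4 - (1/2 + 2*l)^2) - 3/4 * arcsin (1/3)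
      ≤ arcsinUpper x * (7/4 - (1/2 + 2*l)^2) - 3/4 * arcsinLower (1/3) := by
        gcongr
        · exact arcsin_le_arcsinUpper (by linarith) hx2
        · exact arcsinLower_le_arcsin (by norm_num) (by norm_num)
    _ ≤ 0.01756 := by
        rw [seven_fourths_sub_sq_eq hl.ne' hx]
        linarith [arcsinUpper_mul_le hx1 hx2]
end

section
/- For every x with 1/4 ≤ x ≤ 0.5625, the inequality f₁(x) ≥ f₂(x) holds, where f₁(x) = (1/2)·(0.4365·π − arccos(√x))·(1 − x) and f₂(x) = 0.19705·arcsin((1 − √x)/(1 + √x))·(1 − x) + (arcsin(1/3)/2)·x. -/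
/-!
Write `s = √x ∈ [1/2, 3/4]`; since `arccos s = π/2 - arcsin s`, the left side is
`(arcsin s - 0.0635 π)(1 - s²) / 2`. On a cell `s₀ ≤ s ≤ s₁` every factor is monotone:
`arcsin s` increases while `(1 - s)/(1 + s)` and `1 - s²` decrease. So the left side is at least
its value with `arcsin s₀` and `1 - s₁²`, and the right side is at most its value with
`arcsin ((1 - s₀)/(1 + s₀))`, `1 - s₀²` and `s₁²`. Five cells of width `1/20` suffice, the
arcsine values at the cell ends being certified through the Taylor bound
`|sin q - (q - q³/6)| ≤ q⁵/100` on `[0, 1]`.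
-/

open Real Set

lemma le_arcsin_of_taylor_le {q y : ℝ} (hq₀ : 0 ≤ q) (hq₁ : q ≤ 1)
    (h : q - q ^ 3 / 6 + q ^ 5 / 100 ≤ y) : q ≤ arcsin y := by
  have hsin : sin q ≤ y := by
    have := (abs_le.1 (sin_bound (abs_le.2 ⟨by linarith, hq₁⟩))).2
    rw [abs_of_nonneg hq₀] at this
    linarith
  calc q = arcsin (sin q) := (arcsin_sin (by linarith [pi_gt_three]) (by linarith [pi_gt_three])).symm
    _ ≤ arcsin y := monotone_arcsin hsin

lemma arcsin_le_of_le_taylor {q y : ℝ} (hq₀ : 0 ≤ q) (hq₁ : q ≤ 1)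
    (h : y ≤ q - q ^ 3 / 6 - q ^ 5 / 100) : arcsin y ≤ q := by
  have hsin : y ≤ sin q := by
    have := (abs_le.1 (sin_bound (abs_le.2 ⟨by linarith, hq₁⟩))).1
    rw [abs_of_nonneg hq₀] at this
    linarith
  calc arcsin y ≤ arcsin (sin q) := monotone_arcsin hsin
    _ = q := arcsin_sin (by linarith [pi_gt_three]) (by linarith [pi_gt_three])

lemma arcsin_one_third_le : arcsin (1 / 3) ≤ 0.3407 :=
  arcsin_le_of_le_taylor (by norm_num) (by norm_num) (by norm_num)

lemma one_sub_div_one_add_antitoneOn : AntitoneOn (fun s : ℝ => (1 - s) / (1 + s)) (Ioi (-1)) := by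
  intro a ha b hb hab
  simp only [mem_Ioi] at ha hb
  rw [div_le_div_iff₀ (by linarith) (by linarith)]
  nlinarith

lemma f1_ge_f2_sqrt_of_mem_Icc {s s₀ s₁ A T : ℝ} (hs : s ∈ Icc s₀ s₁) (hs₀ : 0 ≤ s₀)
    (hs₁ : s₁ ≤ 1) (hA : A ≤ arcsin s₀) (hT : arcsin ((1 - s₀) / (1 + s₀)) ≤ T)
    (hA₀ : 0.0635 * 3.141593 ≤ A)
    (hcert : 0.19705 * T * (1 - s₀ ^ 2) + 0.3407 / 2 * s₁ ^ 2 ≤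
      1 / 2 * (A - 0.0635 * 3.141593) * (1 - s₁ ^ 2)) :
    0.19705 * arcsin ((1 - s) / (1 + s)) * (1 - s ^ 2) + arcsin (1 / 3) / 2 * s ^ 2 ≤
      1 / 2 * (arcsin s - 0.0635 * π) * (1 - s ^ 2) := by
  obtain ⟨hs_lo, hs_hi⟩ := hs
  have hT₀ : 0 ≤ arcsin ((1 - s) / (1 + s)) :=
    arcsin_nonneg.2 (div_nonneg (by linarith) (by linarith))
  have hlhs : (A - 0.0635 * 3.141593) * (1 - s₁ ^ 2) ≤ (arcsin s - 0.0635 * π) * (1 - s ^ 2) := by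
    have hA' : A ≤ arcsin s := hA.trans (monotone_arcsin hs_lo)
    exact mul_le_mul (by linarith [pi_lt_d6]) (by nlinarith) (by nlinarith) (by linarith [pi_lt_d6])
  have hmid : arcsin ((1 - s) / (1 + s)) * (1 - s ^ 2) ≤ T * (1 - s₀ ^ 2) := by
    have hT' : arcsin ((1 - s) / (1 + s)) ≤ T :=
      (monotone_arcsin (one_sub_div_one_add_antitoneOn (mem_Ioi.2 (by linarith))
        (mem_Ioi.2 (by linarith)) hs_lo)).trans hT
    exact mul_le_mul hT' (by nlinarith) (by nlinarith) (hT₀.trans hT')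
  have hrhs : arcsin (1 / 3) * s ^ 2 ≤ 0.3407 * s₁ ^ 2 :=
    mul_le_mul arcsin_one_third_le (by nlinarith) (sq_nonneg s) (by norm_num)
  linarith

lemma f1_ge_f2_sqrt {s : ℝ} (h₀ : 1 / 2 ≤ s) (h₁ : s ≤ 3 / 4) :
    0.19705 * arcsin ((1 - s) / (1 + s)) * (1 - s ^ 2) + arcsin (1 / 3) / 2 * s ^ 2 ≤
      1 / 2 * (arcsin s - 0.0635 * π) * (1 - s ^ 2) := by
  rcases le_total s 0.55 with hhi | hlo
  · refine f1_ge_f2_sqrt_of_mem_Icc (s₀ := 0.5) (s₁ := 0.55) (A := 0.5195) (T := 0.3407)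
      ⟨by linarith, hhi⟩ ?_ ?_ (le_arcsin_of_taylor_le ?_ ?_ ?_) (arcsin_le_of_le_taylor ?_ ?_ ?_)
      ?_ ?_ <;> norm_num
  rcases le_total s 0.6 with hhi | hlo
  · refine f1_ge_f2_sqrt_of_mem_Icc (s₀ := 0.55) (s₁ := 0.6) (A := 0.5761) (T := 0.295)
      ⟨hlo, hhi⟩ ?_ ?_ (le_arcsin_of_taylor_le ?_ ?_ ?_) (arcsin_le_of_le_taylor ?_ ?_ ?_)
      ?_ ?_ <;> norm_num
  rcases le_total s 0.65 with hhi | hlo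
  · refine f1_ge_f2_sqrt_of_mem_Icc (s₀ := 0.6) (s₁ := 0.65) (A := 0.634) (T := 0.253)
      ⟨hlo, hhi⟩ ?_ ?_ (le_arcsin_of_taylor_le ?_ ?_ ?_) (arcsin_le_of_le_taylor ?_ ?_ ?_)
      ?_ ?_ <;> norm_num
  rcases le_total s 0.7 with hhi | hlo
  · refine f1_ge_f2_sqrt_of_mem_Icc (s₀ := 0.65) (s₁ := 0.7) (A := 0.6935) (T := 0.2139)
      ⟨hlo, hhi⟩ ?_ ?_ (le_arcsin_of_taylor_le ?_ ?_ ?_) (arcsin_le_of_le_taylor ?_ ?_ ?_)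
      ?_ ?_ <;> norm_num
  refine f1_ge_f2_sqrt_of_mem_Icc (s₀ := 0.7) (s₁ := 0.75) (A := 0.7547) (T := 0.1775)
    ⟨hlo, by linarith⟩ ?_ ?_ (le_arcsin_of_taylor_le ?_ ?_ ?_) (arcsin_le_of_le_taylor ?_ ?_ ?_)
    ?_ ?_ <;> norm_num

/-- Analytic core of the technical lemma for the largest maximal ring:
for `1/4 ≤ x ≤ 0.5625`,
`(1/2)·(0.4365·π − arccos √x)·(1 − x)
  ≥ 0.19705·arcsin((1 − √x)/(1 + √x))·(1 − x) + (arcsin(1/3)/2)·x`. -/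
theorem f1_ge_f2 (x : ℝ) (h₁ : 1/4 ≤ x) (h₂ : x ≤ 0.5625) :
    1/2 * (0.4365 * π - arccos (Real.sqrt x)) * (1 - x) ≥
      0.19705 * arcsin ((1 - Real.sqrt x) / (1 + Real.sqrt x)) * (1 - x)
        + arcsin (1/3) / 2 * x := by
  obtain ⟨s, hs, rfl⟩ : ∃ s, 0 ≤ s ∧ x = s ^ 2 := ⟨√x, sqrt_nonneg x, (sq_sqrt (by linarith)).symm⟩
  rw [sqrt_sq hs, arccos_eq_pi_div_two_sub_arcsin]
  have key := f1_ge_f2_sqrt (s := s) (by nlinarith) (by nlinarith)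
  linarith
end
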